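/- arXiv:2602.09929 — 2 statements merged into one kernel-verified Lean document; each statement's English description precedes it below -/
import Mathlib

section
/- Let l be a unit vector in Euclidean space ℝ³ whose third coordinate satisfies l₃ ≥ 0, and let μ denote the surface (spherical) measure on the unit sphere S² ⊂ ℝ³. Then the measure of the illuminated part of the closed upper hemisphere, μ({n ∈ S² : n₃ ≥ 0 and ⟪n, l⟫ > 0}), is at least one half of the measure of the closed upper hemisphere, μ({n ∈ S² : n₃ ≥ 0}). -/
open MeasureTheory Set
open scoped RealInnerProductSpace ENNReal NNReal

section aux

variable {E : Type*} [NormedAddCommGroup E] [InnerProductSpace ℝ E]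

lemma refl_norm_eq (l : E) (hl : ‖l‖ = 1) (v : E) :
    ‖v - (2 * ⟪v, l⟫) • l‖ = ‖v‖ := by
  have h1 : ‖v - (2 * ⟪v, l⟫) • l‖ ^ 2 = ‖v‖ ^ 2 := by
    rw [norm_sub_sq_real, real_inner_smul_right, norm_smul, mul_pow]
    simp only [hl, Real.norm_eq_abs, sq_abs, one_pow, mul_one]
    ring
  nlinarith [norm_nonneg (v - (2 * ⟪v, l⟫) • l), norm_nonneg v]

lemma refl_isometry (l : E) (hl : ‖l‖ = 1) :
    Isometry (fun x : E => x - (2 * ⟪x, l⟫) • l) := by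
  apply Isometry.of_dist_eq
  intro x y
  have key : (x - (2 * ⟪x, l⟫) • l) - (y - (2 * ⟪y, l⟫) • l)
      = (x - y) - (2 * ⟪x - y, l⟫) • l := by
    rw [inner_sub_left]
    module
  rw [dist_eq_norm, dist_eq_norm, key, refl_norm_eq l hl]

lemma lipschitzWith_sin : LipschitzWith 1 Real.sin := by
  apply lipschitzWith_of_nnnorm_deriv_le Real.differentiable_sin
  intro x
  rw [Real.deriv_sin, ← NNReal.coe_le_coe, coe_nnnorm, Real.norm_eq_abs]
  exact Real.abs_cos_le_one x

lemma lipschitzWith_cos : LipschitzWith 1 Real.cos := by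
  apply lipschitzWith_of_nnnorm_deriv_le Real.differentiable_cos
  intro x
  rw [Real.deriv_cos', ← NNReal.coe_le_coe, coe_nnnorm, Real.norm_eq_abs, abs_neg]
  exact Real.abs_sin_le_one x

end aux

/-- For a unit light direction `l` with `l 2 ≥ 0`, the spherical
(Hausdorff) measure of the illuminated part of the closed upper hemisphere is at least
half the measure of the closed upper hemisphere. -/
theorem half_hemisphere_illuminated (l : EuclideanSpace ℝ (Fin 3))
    (hl : ‖l‖ = 1) (hl3 : 0 ≤ l 2) :
    (μH[2] : Measure (EuclideanSpace ℝ (Fin 3)))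
        {n : EuclideanSpace ℝ (Fin 3) | ‖n‖ = 1 ∧ 0 ≤ n 2} / 2 ≤
      (μH[2] : Measure (EuclideanSpace ℝ (Fin 3)))
        {n : EuclideanSpace ℝ (Fin 3) | ‖n‖ = 1 ∧ 0 ≤ n 2 ∧ 0 < ⟪n, l⟫} := by
  set μ : Measure (EuclideanSpace ℝ (Fin 3)) := μH[2] with hμ
  set A : Set (EuclideanSpace ℝ (Fin 3)) := {n | ‖n‖ = 1 ∧ 0 ≤ n 2 ∧ 0 < ⟪n, l⟫} with hA
  set B : Set (EuclideanSpace ℝ (Fin 3)) := {n | ‖n‖ = 1 ∧ 0 ≤ n 2 ∧ ⟪n, l⟫ < 0} with hB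
  set C : Set (EuclideanSpace ℝ (Fin 3)) := {n | ‖n‖ = 1 ∧ ⟪n, l⟫ = 0} with hC
  have hlne : l ≠ 0 := by intro h; rw [h, norm_zero] at hl; norm_num at hl
  haveI : Fact (Module.finrank ℝ (EuclideanSpace ℝ (Fin 3)) = 2 + 1) := ⟨by simp⟩
  -- C has Hausdorff dimension ≤ 1, hence μH[2]-measure zero
  have hCzero : μ C = 0 := by
    obtain b := OrthonormalBasis.fromOrthogonalSpanSingleton (𝕜 := ℝ) 2 hlne
    set u : EuclideanSpace ℝ (Fin 3) := (b 0 : EuclideanSpace ℝ (Fin 3)) with hu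
    set v : EuclideanSpace ℝ (Fin 3) := (b 1 : EuclideanSpace ℝ (Fin 3)) with hv
    set f : ℝ → EuclideanSpace ℝ (Fin 3) :=
      fun θ => Real.cos θ • u + Real.sin θ • v with hf
    have hlip : LipschitzWith 2 f := by
      apply LipschitzWith.of_dist_le_mul
      intro x y
      have hun : ‖u‖ = 1 := b.orthonormal.1 0
      have hvn : ‖v‖ = 1 := b.orthonormal.1 1
      have hdiff : f x - f y
          = (Real.cos x - Real.cos y) • u + (Real.sin x - Real.sin y) • v := by
        simp only [hf]; module
      have hcos : |Real.cos x - Real.cos y| ≤ |x - y| := by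
        have := lipschitzWith_cos.dist_le_mul x y
        simpa [Real.dist_eq] using this
      have hsin : |Real.sin x - Real.sin y| ≤ |x - y| := by
        have := lipschitzWith_sin.dist_le_mul x y
        simpa [Real.dist_eq] using this
      rw [dist_eq_norm, hdiff]
      calc ‖(Real.cos x - Real.cos y) • u + (Real.sin x - Real.sin y) • v‖
          ≤ ‖(Real.cos x - Real.cos y) • u‖ + ‖(Real.sin x - Real.sin y) • v‖ :=
            norm_add_le _ _
        _ = |Real.cos x - Real.cos y| + |Real.sin x - Real.sin y| := by
            rw [norm_smul, norm_smul, hun, hvn]; simp [Real.norm_eq_abs]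
        _ ≤ |x - y| + |x - y| := add_le_add hcos hsin
        _ = 2 * dist x y := by rw [Real.dist_eq]; ring
    have hsub : C ⊆ Set.range f := by
      rintro n ⟨hn1, hn2⟩
      have hnK : n ∈ (ℝ ∙ l)ᗮ := by
        rw [Submodule.mem_orthogonal_singleton_iff_inner_left]
        exact hn2
      set m : ((ℝ ∙ l)ᗮ : Submodule ℝ (EuclideanSpace ℝ (Fin 3))) := ⟨n, hnK⟩ with hm
      set a : ℝ := b.repr m 0 with ha
      set c : ℝ := b.repr m 1 with hc
      have hsum : a • u + c • v = n := by
        have := b.sum_repr m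
        rw [Fin.sum_univ_two] at this
        have := congrArg (Subtype.val) this
        simpa [hu, hv, ha, hc] using this
      have h1 : ‖b.repr m‖ = 1 := by
        rw [b.repr.norm_map m]
        simpa [hm] using hn1
      rw [EuclideanSpace.norm_eq, Fin.sum_univ_two, Real.sqrt_eq_one] at h1
      have habs : a ^ 2 + c ^ 2 = 1 := by
        simpa [ha, hc, Real.norm_eq_abs, sq_abs] using h1
      set z : ℂ := ⟨a, c⟩ with hz
      have hzabs : ‖z‖ = 1 := by
        rw [Complex.norm_def, Complex.normSq_mk]
        rw [show a * a + c * c = 1 by nlinarith]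
        exact Real.sqrt_one
      have hzne : z ≠ 0 := by
        intro h; rw [h] at hzabs; simp at hzabs
      refine ⟨Complex.arg z, ?_⟩
      rw [hf]
      simp only
      rw [Complex.cos_arg hzne, Complex.sin_arg, hzabs]
      simpa [hz] using hsum
    have hdim : dimH C ≤ 1 := by
      calc dimH C ≤ dimH (Set.range f) := dimH_mono hsub
        _ ≤ dimH (Set.univ : Set ℝ) := by
            rw [← Set.image_univ]; exact hlip.dimH_image_le _
        _ = 1 := Real.dimH_univ
    have h12 : (1 : ℝ≥0∞) < ((2 : ℝ≥0) : ℝ≥0∞) := by norm_num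
    have h0 : μH[((2 : ℝ≥0) : ℝ)] C = 0 :=
      hausdorffMeasure_of_dimH_lt (hdim.trans_lt h12)
    have h2 : ((2 : ℝ≥0) : ℝ) = (2 : ℝ) := by norm_num
    rw [h2] at h0
    exact h0
  -- the reflection through the hyperplane orthogonal to l
  set φ : EuclideanSpace ℝ (Fin 3) → EuclideanSpace ℝ (Fin 3) :=
    fun x => x - (2 * ⟪x, l⟫) • l with hφ
  have hiso : Isometry φ := refl_isometry l hl
  have hmapsto : φ '' B ⊆ A := by
    rintro _ ⟨n, ⟨hn1, hn2, hn3⟩, rfl⟩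
    have hnorm : ‖φ n‖ = ‖n‖ := refl_norm_eq l hl n
    refine ⟨by rw [hnorm, hn1], ?_, ?_⟩
    · have hcoord : (φ n) 2 = n 2 - (2 * ⟪n, l⟫) * l 2 := by
        simp [hφ, PiLp.sub_apply, PiLp.smul_apply, smul_eq_mul]
      rw [hcoord]
      have : 0 ≤ -(2 * ⟪n, l⟫) * l 2 := mul_nonneg (by linarith) hl3
      linarith
    · have : ⟪φ n, l⟫ = -⟪n, l⟫ := by
        simp only [hφ]
        rw [inner_sub_left, real_inner_smul_left, real_inner_self_eq_norm_sq, hl]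
        ring
      rw [this]; linarith
  have hBA : μ B ≤ μ A := by
    calc μ B = μ (φ '' B) := (hiso.hausdorffMeasure_image (Or.inl (by norm_num)) B).symm
      _ ≤ μ A := measure_mono hmapsto
  have hcover : {n : EuclideanSpace ℝ (Fin 3) | ‖n‖ = 1 ∧ 0 ≤ n 2} ⊆ A ∪ B ∪ C := by
    rintro n ⟨hn1, hn2⟩
    rcases lt_trichotomy (⟪n, l⟫ : ℝ) 0 with h | h | h
    · exact Or.inl (Or.inr ⟨hn1, hn2, h⟩)
    · exact Or.inr ⟨hn1, h⟩
    · exact Or.inl (Or.inl ⟨hn1, hn2, h⟩)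
  have hH : μ {n : EuclideanSpace ℝ (Fin 3) | ‖n‖ = 1 ∧ 0 ≤ n 2} ≤ μ A * 2 := by
    calc μ {n : EuclideanSpace ℝ (Fin 3) | ‖n‖ = 1 ∧ 0 ≤ n 2}
        ≤ μ (A ∪ B ∪ C) := measure_mono hcover
      _ ≤ μ (A ∪ B) + μ C := measure_union_le _ _
      _ = μ (A ∪ B) := by rw [hCzero, add_zero]
      _ ≤ μ A + μ B := measure_union_le _ _
      _ ≤ μ A + μ A := add_le_add_right hBA _
      _ = μ A * 2 := by ring
  rw [ENNReal.div_le_iff_le_mul (Or.inl (by norm_num)) (Or.inl (by norm_num))]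
  exact hH
end

section
/- Let ψ₀ ∈ ℝ and define six ring lights at elevation 45° by l_k = (cos(ψ₀ + kπ/3)/√2, sin(ψ₀ + kπ/3)/√2, 1/√2) for k = 0, 1, …, 5. Then for every unit vector n ∈ ℝ³ with n₃ > 0, the number of indices k ∈ {0, …, 5} with ⟪n, l_k⟫ > 0 is at least 3. That is, six uniformly spaced ring lights at elevation 45° illuminate every point of the open upper hemisphere at least three times. -/
/-!
Lights at opposite azimuths `θ` and `θ + π` have horizontal components that cancel, so
`⟪n, l(θ)⟫ + ⟪n, l(θ + π)⟫ = √2 n₃ > 0` and at least one light of every antipodal pair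
illuminates `n`. The six lights form three such pairs.
-/

open scoped RealInnerProductSpace Classical

/-- The ring light at azimuth `θ` at elevation 45°:
`l(θ) = (cos θ/√2, sin θ/√2, 1/√2)`. -/
noncomputable def ringLight (θ : ℝ) : EuclideanSpace ℝ (Fin 3) :=
  (EuclideanSpace.equiv (Fin 3) ℝ).symm
    ![Real.cos θ / Real.sqrt 2, Real.sin θ / Real.sqrt 2, 1 / Real.sqrt 2]

open Finset

lemma Finset.le_card_filter_range_two_mul {P : ℕ → Prop} [DecidablePred P] (m : ℕ)
    (h : ∀ k < m, P k ∨ P (k + m)) : m ≤ #((range (2 * m)).filter P) := by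
  calc m = #(range m) := (card_range m).symm
    _ ≤ _ := card_le_card_of_injOn (fun k => if P k then k else k + m)
        (fun k hk => by
          have hk : k < m := mem_range.mp hk
          simp only [coe_filter, mem_range, Set.mem_ofPred_eq]
          split_ifs with hP
          · exact ⟨by omega, hP⟩
          · exact ⟨by omega, (h k hk).resolve_left hP⟩)
        (fun a ha b hb hab => by
          have ha : a < m := mem_range.mp ha
          have hb : b < m := mem_range.mp hb
          dsimp only at hab
          split_ifs at hab <;> omega)

lemma inner_ringLight (n : EuclideanSpace ℝ (Fin 3)) (θ : ℝ) :
    ⟪n, ringLight θ⟫ = (n 0 * Real.cos θ + n 1 * Real.sin θ + n 2) / Real.sqrt 2 := by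
  simp only [ringLight, EuclideanSpace.equiv, one_div, PiLp.continuousLinearEquiv_symm_apply,
    PiLp.inner_apply, RCLike.inner_apply, Real.ringHom_apply, Fin.sum_univ_three, Fin.isValue,
    Matrix.cons_val_zero, Matrix.cons_val_one, Matrix.cons_val]
  ring

lemma inner_ringLight_add_inner_ringLight_add_pi (n : EuclideanSpace ℝ (Fin 3)) (θ : ℝ) :
    ⟪n, ringLight θ⟫ + ⟪n, ringLight (θ + Real.pi)⟫ = Real.sqrt 2 * n 2 := by
  have hsqrt : Real.sqrt 2 ≠ 0 := by positivity
  rw [inner_ringLight, inner_ringLight, Real.cos_add_pi, Real.sin_add_pi]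
  field_simp
  rw [Real.sq_sqrt zero_le_two]
  ring

lemma inner_ringLight_pos_or_inner_ringLight_add_pi_pos {n : EuclideanSpace ℝ (Fin 3)}
    (hn3 : 0 < n 2) (θ : ℝ) : 0 < ⟪n, ringLight θ⟫ ∨ 0 < ⟪n, ringLight (θ + Real.pi)⟫ := by
  have hsum := inner_ringLight_add_inner_ringLight_add_pi n θ
  have : 0 < Real.sqrt 2 * n 2 := by positivity
  by_contra! h
  linarith [h.1, h.2]

theorem six_ring_lights_triple_illumination_general (ψ₀ : ℝ) (n : EuclideanSpace ℝ (Fin 3))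
    (hn3 : 0 < n 2) :
    3 ≤ ((Finset.range 6).filter
        (fun k : ℕ => 0 < ⟪n, ringLight (ψ₀ + k * Real.pi / 3)⟫)).card := by
  refine Finset.le_card_filter_range_two_mul 3 fun k _ => ?_
  have hθ : ψ₀ + ((k + 3 : ℕ) : ℝ) * Real.pi / 3 = ψ₀ + k * Real.pi / 3 + Real.pi := by
    push_cast
    ring
  rw [hθ]
  exact inner_ringLight_pos_or_inner_ringLight_add_pi_pos hn3 _

/-- Six uniformly spaced ring lights at elevation 45° (azimuths
`ψ₀ + kπ/3`, `k = 0, …, 5`) illuminate every unit normal of the open upper hemisphere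
at least three times. -/
theorem six_ring_lights_triple_illumination (ψ₀ : ℝ) (n : EuclideanSpace ℝ (Fin 3))
    (hn : ‖n‖ = 1) (hn3 : 0 < n 2) :
    3 ≤ ((Finset.range 6).filter
        (fun k : ℕ => 0 < ⟪n, ringLight (ψ₀ + k * Real.pi / 3)⟫)).card :=
  six_ring_lights_triple_illumination_general ψ₀ n hn3
end
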